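/- Let π be a probability distribution with π_i > 0, f:[n]→[0,1] with ∑_i f(i)π_i = μ, and P diagonal with P_{jj} = e^{−r f(j)} for 0 ≤ r ≤ 1/2. Then for every vector y with ⟨y,π⟩_π = 0, ‖(yP)^∥‖_π ≤ r√μ · ‖y‖_π, and ‖(yP)^⊥‖_π ≤ ‖y‖_π. -/

import Mathlib

open Finset Matrix

/-- Row-stochastic matrix. -/
def IsStochastic {n : ℕ} (M : Matrix (Fin n) (Fin n) ℝ) : Prop :=
  (∀ i j, 0 ≤ M i j) ∧ ∀ i, ∑ j, M i j = 1

/-- Probability distribution on `Fin n`. -/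
def IsDist {n : ℕ} (x : Fin n → ℝ) : Prop :=
  (∀ i, 0 ≤ x i) ∧ ∑ i, x i = 1

/-- Total variation distance. -/
noncomputable def tvDist {n : ℕ} (u w : Fin n → ℝ) : ℝ :=
  (1 / 2) * ∑ i, |u i - w i|

/-- Inner product under the π-kernel. -/
noncomputable def piInner {n : ℕ} (π u v : Fin n → ℝ) : ℝ :=
  ∑ i, u i * v i / π i

/-- π-norm. -/
noncomputable def piNorm {n : ℕ} (π u : Fin n → ℝ) : ℝ :=
  Real.sqrt (∑ i, (u i) ^ 2 / π i)

/-- Component of `x` parallel to `π` (in the π-inner product). -/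
noncomputable def parComp {n : ℕ} (π x : Fin n → ℝ) : Fin n → ℝ :=
  fun i => piInner π x π * π i

/-- Component of `x` perpendicular to `π` (in the π-inner product). -/
noncomputable def perpComp {n : ℕ} (π x : Fin n → ℝ) : Fin n → ℝ :=
  fun i => x i - parComp π x i

/-- Spectral expansion of a Markov chain with stationary distribution π. -/
noncomputable def specExp {n : ℕ} (π : Fin n → ℝ) (M : Matrix (Fin n) (Fin n) ℝ) : ℝ :=
  sSup {r : ℝ | ∃ x : Fin n → ℝ, x ≠ 0 ∧ piInner π x π = 0 ∧
    r = piNorm π (x ᵥ* M) / piNorm π x}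

/-!
Since `⟨y, π⟩_π = ∑ y_i = 0`, the parallel part of `yP` has π-norm `|∑ y_i e^{-r f(i)}| =
|∑ y_i (1 - e^{-r f(i)})|`. Cauchy–Schwarz with weights `1/π_i` and `π_i` bounds this by
`‖y‖_π · (∑ π_i (1 - e^{-r f(i)})²)^{1/2}`, and `(1 - e^{-r f(i)})² ≤ r² f(i)² ≤ r² f(i)` makes the
last sum at most `r² μ`. The perpendicular part is bounded by Pythagoras and the fact that `P` is a
diagonal contraction.
-/

section PiNorm

variable {n : ℕ} {π : Fin n → ℝ}

lemma piInner_self_right (hπ : ∀ i, π i ≠ 0) (x : Fin n → ℝ) :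
    piInner π x π = ∑ i, x i := by
  simp only [piInner, mul_div_assoc, div_self (hπ _), mul_one]

lemma piNorm_parComp (hπ : ∑ i, π i = 1) (hπne : ∀ i, π i ≠ 0) (x : Fin n → ℝ) :
    piNorm π (parComp π x) = |piInner π x π| := by
  have h : ∀ i, (piInner π x π * π i) ^ 2 / π i = piInner π x π ^ 2 * π i := fun i => by
    field_simp [hπne i]
  simp only [piNorm, parComp, h, ← Finset.mul_sum, hπ, mul_one, Real.sqrt_sq_eq_abs]

lemma sum_sq_div_perpComp (hπ : ∑ i, π i = 1) (hπne : ∀ i, π i ≠ 0) (x : Fin n → ℝ) :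
    ∑ i, perpComp π x i ^ 2 / π i = ∑ i, x i ^ 2 / π i - piInner π x π ^ 2 := by
  set c := piInner π x π
  have h : ∀ i, perpComp π x i ^ 2 / π i = x i ^ 2 / π i - 2 * c * x i + c ^ 2 * π i := fun i => by
    simp only [perpComp, parComp]
    field_simp [hπne i]
    ring
  have hc : ∑ i, x i = c := (piInner_self_right hπne x).symm
  rw [Finset.sum_congr rfl fun i _ => h i, Finset.sum_add_distrib, Finset.sum_sub_distrib,
    ← Finset.mul_sum, ← Finset.mul_sum, hπ, hc]
  ring

lemma piNorm_perpComp_le (hπ : ∑ i, π i = 1) (hπne : ∀ i, π i ≠ 0) (x : Fin n → ℝ) :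
    piNorm π (perpComp π x) ≤ piNorm π x := by
  unfold piNorm
  rw [sum_sq_div_perpComp hπ hπne]
  exact Real.sqrt_le_sqrt (sub_le_self _ (sq_nonneg _))

lemma piNorm_le_piNorm_of_abs_le (hπ : ∀ i, 0 ≤ π i) {x y : Fin n → ℝ}
    (hxy : ∀ i, |x i| ≤ |y i|) : piNorm π x ≤ piNorm π y :=
  Real.sqrt_le_sqrt <| Finset.sum_le_sum fun i _ =>
    div_le_div_of_nonneg_right (sq_le_sq.mpr (hxy i)) (hπ i)

lemma abs_sum_mul_le_piNorm_mul (hπ : ∀ i, 0 < π i) (x g : Fin n → ℝ) :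
    |∑ i, x i * g i| ≤ piNorm π x * Real.sqrt (∑ i, g i ^ 2 * π i) := by
  have hcs : (∑ i, x i * g i) ^ 2 ≤ (∑ i, x i ^ 2 / π i) * ∑ i, g i ^ 2 * π i :=
    Finset.sum_sq_le_sum_mul_sum_of_sq_le_mul _
      (fun i _ => div_nonneg (sq_nonneg _) (hπ i).le)
      (fun i _ => mul_nonneg (sq_nonneg _) (hπ i).le)
      (fun i _ => le_of_eq (by field_simp [(hπ i).ne']))
  rw [piNorm, ← Real.sqrt_mul (Finset.sum_nonneg fun i _ => div_nonneg (sq_nonneg _) (hπ i).le)]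
  exact Real.abs_le_sqrt hcs

end PiNorm

lemma one_sub_exp_neg_mul_sq_le {r t : ℝ} (hr : 0 ≤ r) (ht0 : 0 ≤ t) (ht1 : t ≤ 1) :
    (1 - Real.exp (-(r * t))) ^ 2 ≤ r ^ 2 * t := by
  have hrt : 0 ≤ r * t := mul_nonneg hr ht0
  have hlo : 0 ≤ 1 - Real.exp (-(r * t)) := by
    simpa using Real.exp_le_one_iff.mpr (neg_nonpos.mpr hrt)
  have hhi : 1 - Real.exp (-(r * t)) ≤ r * t := by
    linarith [Real.add_one_le_exp (-(r * t))]
  calc (1 - Real.exp (-(r * t))) ^ 2 ≤ (r * t) ^ 2 := pow_le_pow_left₀ hlo hhi 2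
    _ ≤ r ^ 2 * t := by nlinarith [mul_nonneg (mul_nonneg (sq_nonneg r) ht0) (sub_nonneg.mpr ht1)]

theorem stmt_13_general (n : ℕ) (π : Fin n → ℝ) (hπ : IsDist π) (hπpos : ∀ i, 0 < π i)
    (f : Fin n → ℝ) (hf : ∀ i, 0 ≤ f i ∧ f i ≤ 1)
    (μ : ℝ) (hμ : ∑ i, f i * π i = μ)
    (r : ℝ) (hr0 : 0 ≤ r)
    (P : Matrix (Fin n) (Fin n) ℝ)
    (hP : P = Matrix.diagonal fun j => Real.exp (-(r * f j)))
    (y : Fin n → ℝ) (hy : piInner π y π = 0) :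
    piNorm π (parComp π (y ᵥ* P)) ≤ r * Real.sqrt μ * piNorm π y ∧
    piNorm π (perpComp π (y ᵥ* P)) ≤ piNorm π y := by
  have hπne : ∀ i, π i ≠ 0 := fun i => (hπpos i).ne'
  set g : Fin n → ℝ := fun i => 1 - Real.exp (-(r * f i))
  have hyP_exp : ∀ i, (y ᵥ* P) i = y i * Real.exp (-(r * f i)) := fun i => by
    rw [hP, vecMul_diagonal]
  have hyP : ∀ i, (y ᵥ* P) i = y i - y i * g i := fun i => by
    rw [hyP_exp]
    ring
  have hpar : piInner π (y ᵥ* P) π = -∑ i, y i * g i := by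
    simp only [piInner_self_right hπne, hyP, Finset.sum_sub_distrib]
    rw [← piInner_self_right hπne, hy, zero_sub]
  have hg : ∑ i, g i ^ 2 * π i ≤ r ^ 2 * μ := by
    rw [← hμ, Finset.mul_sum]
    exact Finset.sum_le_sum fun i _ => by
      rw [← mul_assoc]
      exact mul_le_mul_of_nonneg_right
        (one_sub_exp_neg_mul_sq_le hr0 (hf i).1 (hf i).2) (hπpos i).le
  constructor
  · calc piNorm π (parComp π (y ᵥ* P)) = |∑ i, y i * g i| := by
          rw [piNorm_parComp hπ.2 hπne, hpar, abs_neg]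
      _ ≤ piNorm π y * Real.sqrt (∑ i, g i ^ 2 * π i) := abs_sum_mul_le_piNorm_mul hπpos y g
      _ ≤ piNorm π y * Real.sqrt (r ^ 2 * μ) :=
          mul_le_mul_of_nonneg_left (Real.sqrt_le_sqrt hg) (Real.sqrt_nonneg _)
      _ = r * Real.sqrt μ * piNorm π y := by
          rw [Real.sqrt_mul (sq_nonneg r), Real.sqrt_sq hr0]
          ring
  · refine (piNorm_perpComp_le hπ.2 hπne _).trans
      (piNorm_le_piNorm_of_abs_le (fun i => (hπpos i).le) fun i => ?_)
    rw [hyP_exp, abs_mul, Real.abs_exp]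
    exact mul_le_of_le_one_right (abs_nonneg _)
      (Real.exp_le_one_iff.mpr (neg_nonpos.mpr (mul_nonneg hr0 (hf i).1)))

theorem stmt_13 (n : ℕ) (π : Fin n → ℝ) (hπ : IsDist π) (hπpos : ∀ i, 0 < π i)
    (f : Fin n → ℝ) (hf : ∀ i, 0 ≤ f i ∧ f i ≤ 1)
    (μ : ℝ) (hμ : ∑ i, f i * π i = μ)
    (r : ℝ) (hr0 : 0 ≤ r) (hr : r ≤ 1 / 2)
    (P : Matrix (Fin n) (Fin n) ℝ)
    (hP : P = Matrix.diagonal fun j => Real.exp (-(r * f j)))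
    (y : Fin n → ℝ) (hy : piInner π y π = 0) :
    piNorm π (parComp π (y ᵥ* P)) ≤ r * Real.sqrt μ * piNorm π y ∧
    piNorm π (perpComp π (y ᵥ* P)) ≤ piNorm π y :=
  stmt_13_general n π hπ hπpos f hf μ hμ r hr0 P hP y hy
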